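/- Suppose 0 ≤ Δ ≤ γ·(I − γP)^{-1}(P_1(E) + P_2(E)) pointwise, where γ ∈ (0,1), P, P_1, P_2 are monotone linear operators preserving constants (P1 = 1, etc.) and nonnegativity, E is a nonnegative bounded function with μ-weighted L² norm ‖E‖_μ' ≤ ε for every probability measure μ' (in particular sup-bounded by ε). Then ‖Δ‖_μ ≤ (2γ/(1−γ))·√2·ε for any probability measure μ. -/

import Mathlib

open MeasureTheory

/-! Testing the bound on `E` against Dirac masses gives `E ≤ ε` pointwise. Since `P₁`, `P₂` are
monotone and fix constants, `P₁ E + P₂ E ≤ 2ε`; since `R` is monotone and sends the constant `c`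
to `c / (1 - γ)`, we get `0 ≤ Δ ≤ 2γε / (1 - γ)` pointwise, which bounds the `L²(μ)` norm of `Δ`
for every probability measure `μ`. The remaining factor `√2 ≥ 1` is slack. -/

section

variable {X : Type*}

namespace LinearMap

variable {T : (X → ℝ) →ₗ[ℝ] (X → ℝ)}

theorem map_const_of_map_one (hT : T 1 = 1) (c : ℝ) : T (fun _ => c) = fun _ => c := by
  have hc : (fun _ => c : X → ℝ) = c • 1 := by ext; simp
  rw [hc, map_smul, hT]

theorem apply_le_of_le_const (hT : Monotone T) (hT1 : T 1 = 1) {f : X → ℝ} {c : ℝ}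
    (hf : ∀ x, f x ≤ c) (x : X) : T f x ≤ c := by
  simpa [map_const_of_map_one hT1] using hT hf x

theorem map_const_of_comp_id_sub_smul_eq_id {P R : (X → ℝ) →ₗ[ℝ] (X → ℝ)} {γ : ℝ}
    (hγ : γ ≠ 1) (hP : P 1 = 1) (hR : R.comp (id - γ • P) = id) (c : ℝ) :
    R (fun _ => c) = fun _ => c / (1 - γ) := by
  have hc : (LinearMap.id - γ • P : (X → ℝ) →ₗ[ℝ] (X → ℝ)) (fun _ => c / (1 - γ)) =
      fun _ => c := by
    ext x
    simp only [sub_apply, id_apply, smul_apply, map_const_of_map_one hP, Pi.sub_apply,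
      Pi.smul_apply, smul_eq_mul]
    field_simp
  rw [← hc, ← comp_apply, hR, id_apply]

end LinearMap

variable [MeasurableSpace X]

theorem abs_le_of_forall_sqrt_integral_sq_le {f : X → ℝ} (hf : Measurable f) {ε : ℝ}
    (h : ∀ μ : Measure X, IsProbabilityMeasure μ → Real.sqrt (∫ x, f x ^ 2 ∂μ) ≤ ε) (x : X) :
    |f x| ≤ ε := by
  simpa [integral_dirac' _ _ (hf.pow_const 2).stronglyMeasurable, Real.sqrt_sq_eq_abs]
    using h (Measure.dirac x) inferInstance

theorem sqrt_integral_sq_le_of_abs_le (μ : Measure X) [IsProbabilityMeasure μ] {f : X → ℝ}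
    {c : ℝ} (hf : ∀ x, |f x| ≤ c) : Real.sqrt (∫ x, f x ^ 2 ∂μ) ≤ c := by
  have hc : 0 ≤ c := (abs_nonneg _).trans (hf (nonempty_of_isProbabilityMeasure μ).some)
  have hsq : ∀ x, ‖f x ^ 2‖ ≤ c ^ 2 := fun x => by
    simpa [sq_abs] using pow_le_pow_left₀ (abs_nonneg (f x)) (hf x) 2
  have hint : ∫ x, f x ^ 2 ∂μ ≤ c ^ 2 := by
    simpa using (le_abs_self _).trans (norm_integral_le_of_norm_le_const (.of_forall hsq) :
      ‖∫ x, f x ^ 2 ∂μ‖ ≤ c ^ 2 * μ.real Set.univ)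
  exact Real.sqrt_le_iff.mpr ⟨hc, hint⟩

end

theorem decentralized_error_term_bound_general {X : Type*} [MeasurableSpace X] (μ : Measure X)
    [IsProbabilityMeasure μ] (γ : ℝ) (h0 : 0 < γ) (h1 : γ < 1)
    (P P₁ P₂ R : (X → ℝ) →ₗ[ℝ] (X → ℝ))
    (hP₁mono : ∀ f g : X → ℝ, (∀ x, f x ≤ g x) → ∀ x, P₁ f x ≤ P₁ g x)
    (hP₂mono : ∀ f g : X → ℝ, (∀ x, f x ≤ g x) → ∀ x, P₂ f x ≤ P₂ g x)
    (hP1 : P (fun _ => (1 : ℝ)) = fun _ => (1 : ℝ))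
    (hP₁1 : P₁ (fun _ => (1 : ℝ)) = fun _ => (1 : ℝ))
    (hP₂1 : P₂ (fun _ => (1 : ℝ)) = fun _ => (1 : ℝ))
    (hRinv₁ : R.comp (LinearMap.id - γ • P) = LinearMap.id)
    (hRmono : ∀ f g : X → ℝ, (∀ x, f x ≤ g x) → ∀ x, R f x ≤ R g x)
    (Δ E : X → ℝ) (ε : ℝ) (hε : 0 ≤ ε) (hEm : Measurable E)
    (hEnorm : ∀ μ' : Measure X, IsProbabilityMeasure μ' →
      Real.sqrt (∫ x, E x ^ 2 ∂μ') ≤ ε)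
    (hΔ0 : ∀ x, 0 ≤ Δ x)
    (hΔ : ∀ x, Δ x ≤ γ * R (fun y => P₁ E y + P₂ E y) x) :
    Real.sqrt (∫ x, Δ x ^ 2 ∂μ) ≤ (2 * γ / (1 - γ)) * Real.sqrt 2 * ε := by
  have hE : ∀ x, E x ≤ ε := fun x =>
    (le_abs_self _).trans (abs_le_of_forall_sqrt_integral_sq_le hEm hEnorm x)
  have hPE : ∀ y, P₁ E y + P₂ E y ≤ 2 * ε := fun y => by
    linarith [LinearMap.apply_le_of_le_const (fun f g h => hP₁mono f g h) hP₁1 hE y,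
      LinearMap.apply_le_of_le_const (fun f g h => hP₂mono f g h) hP₂1 hE y]
  have hRPE : ∀ x, R (fun y => P₁ E y + P₂ E y) x ≤ 2 * ε / (1 - γ) := fun x => by
    simpa [LinearMap.map_const_of_comp_id_sub_smul_eq_id h1.ne hP1 hRinv₁]
      using hRmono _ (fun _ => 2 * ε) hPE x
  have hΔle : ∀ x, |Δ x| ≤ 2 * γ / (1 - γ) * ε := fun x => by
    rw [abs_of_nonneg (hΔ0 x)]
    calc Δ x ≤ γ * (2 * ε / (1 - γ)) := (hΔ x).trans (mul_le_mul_of_nonneg_left (hRPE x) h0.le)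
      _ = 2 * γ / (1 - γ) * ε := by ring
  have hcoef : 0 ≤ 2 * γ / (1 - γ) * ε := mul_nonneg (by bound) hε
  calc Real.sqrt (∫ x, Δ x ^ 2 ∂μ) ≤ 2 * γ / (1 - γ) * ε := sqrt_integral_sq_le_of_abs_le μ hΔle
    _ ≤ 2 * γ / (1 - γ) * ε * Real.sqrt 2 := le_mul_of_one_le_right hcoef Real.one_lt_sqrt_two.le
    _ = 2 * γ / (1 - γ) * Real.sqrt 2 * ε := by ring

/-- Bound on the decentralized-computation error term:
if `0 ≤ Δ ≤ γ (I − γP)⁻¹ (P₁ E + P₂ E)` pointwise, where `P, P₁, P₂` are monotone unital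
linear operators, `R` is the two-sided inverse of `I − γ P`, `R` is monotone, `E ≥ 0` is
bounded with `‖E‖_{μ'} ≤ ε` for every probability measure `μ'`, then
`‖Δ‖_μ ≤ (2γ/(1−γ))·√2·ε`. -/
theorem decentralized_error_term_bound {X : Type*} [MeasurableSpace X] (μ : Measure X)
    [IsProbabilityMeasure μ] (γ : ℝ) (h0 : 0 < γ) (h1 : γ < 1)
    (P P₁ P₂ R : (X → ℝ) →ₗ[ℝ] (X → ℝ))
    (hPmono : ∀ f g : X → ℝ, (∀ x, f x ≤ g x) → ∀ x, P f x ≤ P g x)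
    (hP₁mono : ∀ f g : X → ℝ, (∀ x, f x ≤ g x) → ∀ x, P₁ f x ≤ P₁ g x)
    (hP₂mono : ∀ f g : X → ℝ, (∀ x, f x ≤ g x) → ∀ x, P₂ f x ≤ P₂ g x)
    (hP1 : P (fun _ => (1 : ℝ)) = fun _ => (1 : ℝ))
    (hP₁1 : P₁ (fun _ => (1 : ℝ)) = fun _ => (1 : ℝ))
    (hP₂1 : P₂ (fun _ => (1 : ℝ)) = fun _ => (1 : ℝ))
    (hRinv₁ : R.comp (LinearMap.id - γ • P) = LinearMap.id)
    (hRinv₂ : (LinearMap.id - γ • P).comp R = LinearMap.id)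
    (hRmono : ∀ f g : X → ℝ, (∀ x, f x ≤ g x) → ∀ x, R f x ≤ R g x)
    (Δ E : X → ℝ) (ε : ℝ) (hε : 0 ≤ ε) (hEm : Measurable E)
    (hE0 : ∀ x, 0 ≤ E x) (hEb : ∃ C, ∀ x, E x ≤ C)
    (hEnorm : ∀ μ' : Measure X, IsProbabilityMeasure μ' →
      Real.sqrt (∫ x, E x ^ 2 ∂μ') ≤ ε)
    (hΔ0 : ∀ x, 0 ≤ Δ x)
    (hΔ : ∀ x, Δ x ≤ γ * R (fun y => P₁ E y + P₂ E y) x) :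
    Real.sqrt (∫ x, Δ x ^ 2 ∂μ) ≤ (2 * γ / (1 - γ)) * Real.sqrt 2 * ε :=
  decentralized_error_term_bound_general μ γ h0 h1 P P₁ P₂ R hP₁mono hP₂mono hP1 hP₁1 hP₂1 hRinv₁
    hRmono Δ E ε hε hEm hEnorm hΔ0 hΔ
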